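/- arXiv:2602.09926 — 3 statements merged into one kernel-verified Lean document; each statement's English description precedes it below -/
import Mathlib

section
/- Let X be a finite set with N ≥ 1, and consider the Markov chain on X^N where at each step a coordinate k* is selected (depending on a randomly drawn user location x with full-support distribution Q) and replaced by a new point y drawn from a full-support distribution P on X. Assume k* is the index of a coordinate minimizing d(x, s_k) for a metric d. Then for any two states A, B ∈ X^N, the probability of reaching B from A in exactly N steps is positive. -/
/-! If the user stands at `A k`, coordinate `k` is among the closest ones, so every
single-coordinate update `A ↦ Function.update A k y` has positive probability. Overwriting the
coordinates of `A` by those of `B` one at a time therefore reaches `B` in `N` steps. -/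

open Finset

variable {X : Type*} [Fintype X] [DecidableEq X] [MetricSpace X]

noncomputable def argminSet {N : ℕ} (A : Fin N → X) (x : X) : Finset (Fin N) :=
  by classical exact Finset.univ.filter (fun k => ∀ j, dist x (A k) ≤ dist x (A j))

/-- Ties among the closest coordinates are broken uniformly. -/
noncomputable def step {N : ℕ} (Q P : X → ℝ) (A B : Fin N → X) : ℝ :=
  by classical exact
  ∑ x : X, ∑ y : X, Q x * P y *
    (((argminSet A x).filter (fun k => Function.update A k y = B)).card /
      (argminSet A x).card : ℝ)

noncomputable def nstep {N : ℕ} (Q P : X → ℝ) :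
    ℕ → (Fin N → X) → (Fin N → X) → ℝ
  | 0, A, B => by classical exact if A = B then 1 else 0
  | t + 1, A, B => ∑ C : Fin N → X, step Q P A C * nstep Q P t C B

section

variable {N : ℕ} {Q P : X → ℝ}

lemma step_nonneg (hQ : ∀ u, 0 ≤ Q u) (hP : ∀ u, 0 ≤ P u) (A B : Fin N → X) :
    0 ≤ step Q P A B :=
  sum_nonneg fun x _ => sum_nonneg fun y _ => by
    have := hQ x; have := hP y; positivity

lemma nstep_nonneg (hQ : ∀ u, 0 ≤ Q u) (hP : ∀ u, 0 ≤ P u) (t : ℕ) (A B : Fin N → X) :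
    0 ≤ nstep Q P t A B := by
  induction t generalizing A with
  | zero => simp only [nstep]; split <;> norm_num
  | succ t ih => exact sum_nonneg fun C _ => mul_nonneg (step_nonneg hQ hP A C) (ih C)

lemma nstep_succ_pos (hQ : ∀ u, 0 ≤ Q u) (hP : ∀ u, 0 ≤ P u) {t : ℕ} {A C B : Fin N → X}
    (hAC : 0 < step Q P A C) (hCB : 0 < nstep Q P t C B) : 0 < nstep Q P (t + 1) A B :=
  sum_pos' (fun D _ => mul_nonneg (step_nonneg hQ hP A D) (nstep_nonneg hQ hP t D B))
    ⟨C, mem_univ C, mul_pos hAC hCB⟩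

lemma step_update_pos (hQ : ∀ u, 0 < Q u) (hP : ∀ u, 0 < P u) (A : Fin N → X) (k : Fin N)
    (y : X) : 0 < step Q P A (Function.update A k y) := by
  classical
  have hk : k ∈ argminSet A (A k) := by simp [argminSet]
  refine sum_pos' (fun x _ => sum_nonneg fun z _ => ?_) ⟨A k, mem_univ _, ?_⟩
  · have := hQ x; have := hP z; positivity
  refine sum_pos' (fun z _ => ?_) ⟨y, mem_univ _, ?_⟩
  · have := hQ (A k); have := hP z; positivity
  have hfilter : (0 : ℝ) < ((argminSet A (A k)).filter
      (fun j => Function.update A j y = Function.update A k y)).card := by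
    exact_mod_cast card_pos.mpr ⟨k, by simp [hk]⟩
  have hargmin : (0 : ℝ) < (argminSet A (A k)).card := by
    exact_mod_cast card_pos.mpr ⟨k, hk⟩
  exact mul_pos (mul_pos (hQ _) (hP _)) (div_pos hfilter hargmin)

lemma nstep_card_pos_of_eqOn_compl (hQ : ∀ u, 0 < Q u) (hP : ∀ u, 0 < P u) (s : Finset (Fin N))
    {A B : Fin N → X} (hAB : ∀ k ∉ s, A k = B k) : 0 < nstep Q P s.card A B := by
  induction s using Finset.induction_on generalizing A with
  | empty =>
    have : A = B := funext fun k => hAB k (notMem_empty k)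
    simp [nstep, this]
  | insert a s ha ih =>
    rw [card_insert_of_notMem ha]
    refine nstep_succ_pos (fun u => (hQ u).le) (fun u => (hP u).le)
      (step_update_pos hQ hP A a (B a)) (ih fun k hk => ?_)
    rcases eq_or_ne k a with rfl | hka
    · simp
    · rw [Function.update_of_ne hka]
      exact hAB k (by simp [hka, hk])

end

theorem stmt_14_general (N : ℕ) (Q P : X → ℝ)
    (hQ : ∀ u, 0 < Q u) (hP : ∀ u, 0 < P u)
    (A B : Fin N → X) :
    0 < nstep Q P N A B := by
  simpa using nstep_card_pos_of_eqOn_compl hQ hP univ (A := A) (B := B) (by simp)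

/-- If users' distribution Q and new-server distribution P have full support,
then any state B is reachable from any state A in exactly N steps with positive
probability. -/
theorem stmt_14 (N : ℕ) (hN : 0 < N) (Q P : X → ℝ)
    (hQ : ∀ u, 0 < Q u) (hP : ∀ u, 0 < P u)
    (hQ1 : ∑ u, Q u = 1) (hP1 : ∑ u, P u = 1)
    (A B : Fin N → X) :
    0 < nstep Q P N A B :=
  stmt_14_general N Q P hQ hP A B
end

section
/- Let X ⊂ ℝ^d be a compact set, let r ∈ X^N have pairwise distinct coordinates, and fix i. Then the map s ↦ μ(V_i(s)) is continuous at r, where μ is the Lebesgue measure restricted to X and V_i(s) = {x ∈ X : ‖x − s_i‖ ≤ ‖x − s_j‖ for all j ≠ i} is the Voronoi cell of the i-th coordinate. -/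
/-!
Moving every site by at most `δ` can only change the `i`-th cell at points that are almost
equidistant from `r i` and some `r j`: the symmetric difference of the cells lies in the slabs
`|dist x (r i) - dist x (r j)| ≤ 2δ`. As `δ → 0` these slabs shrink to the perpendicular
bisectors of `r i` and `r j`, which are hyperplanes since `r i ≠ r j`, hence Lebesgue-null; as
Lebesgue measure is finite on the compact set `X`, the measure of the slabs within `X` tends to `0`.
-/

open MeasureTheory

/-- The Voronoi cell (within X) of the i-th point of the configuration s. -/
def vorCell {d N : ℕ} (X : Set (EuclideanSpace ℝ (Fin d)))
    (s : Fin N → EuclideanSpace ℝ (Fin d)) (i : Fin N) :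
    Set (EuclideanSpace ℝ (Fin d)) :=
  {x ∈ X | ∀ j, j ≠ i → ‖x - s i‖ ≤ ‖x - s j‖}

open Filter Topology Set
open scoped ENNReal symmDiff

theorem tendsto_measure_of_tendsto_measure_symmDiff {α ι : Type*} [MeasurableSpace α]
    {μ : Measure α} {l : Filter ι} {A : ι → Set α} {B : Set α} (hB : μ B ≠ ∞)
    (h : Tendsto (fun s => μ (A s ∆ B)) l (𝓝 0)) :
    Tendsto (fun s => μ (A s)) l (𝓝 (μ B)) := by
  rw [ENNReal.tendsto_nhds hB]
  intro ε hε
  filter_upwards [ENNReal.tendsto_nhds_zero.1 h ε hε] with s hs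
  constructor
  · rw [tsub_le_iff_right, ← tsub_le_iff_left]
    exact le_measure_symmDiff.trans (symmDiff_comm (A s) B ▸ hs)
  · rw [← tsub_le_iff_left]
    exact le_measure_symmDiff.trans hs

section Slab

variable {P : Type*} [PseudoMetricSpace P]

def bisectorSlab (a b : P) (δ : ℝ) : Set P :=
  {x | |dist x a - dist x b| ≤ δ}

theorem bisectorSlab_mono (a b : P) {δ η : ℝ} (h : δ ≤ η) :
    bisectorSlab a b δ ⊆ bisectorSlab a b η :=
  fun _ hx => le_trans hx h

theorem isClosed_bisectorSlab (a b : P) (δ : ℝ) : IsClosed (bisectorSlab a b δ) :=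
  isClosed_le (by fun_prop) continuous_const

theorem biInter_bisectorSlab (a b : P) :
    ⋂ δ > (0 : ℝ), bisectorSlab a b δ = {x | dist x a = dist x b} := by
  ext x
  simp only [bisectorSlab, mem_iInter, mem_ofPred_eq]
  refine ⟨fun h => ?_, fun h δ hδ => by simpa [h] using hδ.le⟩
  exact sub_eq_zero.1 <| abs_nonpos_iff.1 <|
    le_of_forall_pos_le_add fun δ hδ => by simpa using h δ hδ

theorem mem_bisectorSlab_of_dist_le {x a b a' b' : P} {δ : ℝ}
    (h : dist x a ≤ dist x b) (h' : dist x b' ≤ dist x a')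
    (ha : dist a a' ≤ δ) (hb : dist b b' ≤ δ) : x ∈ bisectorSlab a b (2 * δ) := by
  have ha' := dist_triangle x a a'
  have hb' := dist_triangle x b' b
  rw [dist_comm b' b] at hb'
  have := dist_nonneg (x := a) (y := a')
  show |dist x a - dist x b| ≤ 2 * δ
  exact abs_le.2 ⟨by linarith, by linarith⟩

variable [MeasurableSpace P] [OpensMeasurableSpace P]

theorem tendsto_measure_bisectorSlab {ν : Measure P} [IsFiniteMeasure ν] {a b : P}
    (h : ν {x | dist x a = dist x b} = 0) :
    Tendsto (fun δ => ν (bisectorSlab a b δ)) (𝓝 0) (𝓝 0) := by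
  have hpos : Tendsto (ν ∘ bisectorSlab a b) (𝓝[>] 0) (𝓝 0) := by
    have := tendsto_measure_biInter_gt (μ := ν) (s := bisectorSlab a b) (a := (0 : ℝ))
      (fun δ _ => (isClosed_bisectorSlab a b δ).nullMeasurableSet)
      (fun _ _ _ hle => bisectorSlab_mono a b hle) ⟨1, one_pos, measure_ne_top ν _⟩
    rwa [biInter_bisectorSlab, h] at this
  rw [ENNReal.tendsto_nhds_zero]
  intro ε hε
  obtain ⟨η, hνη, hη⟩ :=
    ((ENNReal.tendsto_nhds_zero.1 hpos ε hε).and self_mem_nhdsWithin).exists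
  filter_upwards [Iio_mem_nhds (show (0 : ℝ) < η from hη)] with δ hδ
  exact (measure_mono (bisectorSlab_mono a b (le_of_lt hδ))).trans hνη

end Slab

theorem measure_setOf_dist_eq_dist {E : Type*} [NormedAddCommGroup E] [InnerProductSpace ℝ E]
    [FiniteDimensional ℝ E] [MeasurableSpace E] [BorelSpace E] (μ : Measure E)
    [μ.IsAddHaarMeasure] {a b : E} (hab : a ≠ b) : μ {x | dist x a = dist x b} = 0 := by
  have : {x | dist x a = dist x b} = (AffineSubspace.perpBisector a b : Set E) := by
    ext x
    simp [AffineSubspace.mem_perpBisector_iff_dist_eq]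
  rw [this]
  exact Measure.addHaar_affineSubspace μ _ (by simpa using hab)

section Voronoi

variable {d N : ℕ} {X : Set (EuclideanSpace ℝ (Fin d))}

theorem mem_vorCell_iff {s : Fin N → EuclideanSpace ℝ (Fin d)} {i : Fin N}
    {x : EuclideanSpace ℝ (Fin d)} :
    x ∈ vorCell X s i ↔ x ∈ X ∧ ∀ j, j ≠ i → dist x (s i) ≤ dist x (s j) := by
  simp [vorCell, dist_eq_norm]

theorem vorCell_subset (s : Fin N → EuclideanSpace ℝ (Fin d)) (i : Fin N) :
    vorCell X s i ⊆ X :=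
  fun _ hx => hx.1

theorem vorCell_symmDiff_subset (s r : Fin N → EuclideanSpace ℝ (Fin d)) (i : Fin N) :
    vorCell X s i ∆ vorCell X r i ⊆
      ⋃ j ∈ Finset.univ.erase i, bisectorSlab (r i) (r j) (2 * dist s r) := by
  have hrs : ∀ k, dist (r k) (s k) ≤ dist s r :=
    fun k => (dist_comm _ _).trans_le (dist_le_pi_dist s r k)
  rintro x (⟨hs, hr⟩ | ⟨hr, hs⟩) <;> rw [mem_vorCell_iff] at hs hr
  · obtain ⟨j, hji, hj⟩ : ∃ j, j ≠ i ∧ dist x (r j) < dist x (r i) := by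
      simpa [hs.1] using hr
    refine mem_biUnion (Finset.mem_erase.2 ⟨hji, Finset.mem_univ j⟩) ?_
    have := mem_bisectorSlab_of_dist_le hj.le (hs.2 j hji) (hrs j) (hrs i)
    simpa only [bisectorSlab, mem_ofPred_eq, abs_sub_comm] using this
  · obtain ⟨j, hji, hj⟩ : ∃ j, j ≠ i ∧ dist x (s j) < dist x (s i) := by
      simpa [hr.1] using hs
    exact mem_biUnion (Finset.mem_erase.2 ⟨hji, Finset.mem_univ j⟩)
      (mem_bisectorSlab_of_dist_le (hr.2 j hji) hj.le (hrs i) (hrs j))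

end Voronoi

theorem stmt_16_general (d N : ℕ) (X : Set (EuclideanSpace ℝ (Fin d)))
    (hX : IsCompact X)
    (r : Fin N → EuclideanSpace ℝ (Fin d))
    (hinj : Function.Injective r) (i : Fin N) :
    ContinuousAt (fun s : Fin N → EuclideanSpace ℝ (Fin d) =>
      volume (vorCell X s i)) r := by
  let ν := volume.restrict X
  have : IsFiniteMeasure ν := isFiniteMeasure_restrict.2 hX.measure_lt_top.ne
  have hcell : ∀ s, volume (vorCell X s i) = ν (vorCell X s i) :=
    fun s => (Measure.restrict_eq_self _ (vorCell_subset s i)).symm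
  have hslab : ∀ j ∈ Finset.univ.erase i,
      Tendsto (fun s => ν (bisectorSlab (r i) (r j) (2 * dist s r))) (𝓝 r) (𝓝 0) := by
    intro j hj
    have hij : r i ≠ r j := hinj.ne (Finset.ne_of_mem_erase hj).symm
    refine (tendsto_measure_bisectorSlab
      (Measure.restrict_le_self.absolutelyContinuous (measure_setOf_dist_eq_dist _ hij))).comp ?_
    simpa using ((tendsto_id (x := 𝓝 r)).dist (tendsto_const_nhds (x := r))).const_mul 2
  have hsymm : Tendsto (fun s => ν (vorCell X s i ∆ vorCell X r i)) (𝓝 r) (𝓝 0) := by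
    refine tendsto_of_tendsto_of_tendsto_of_le_of_le tendsto_const_nhds
      (by simpa using tendsto_finsetSum _ hslab) (fun _ => zero_le) fun s => ?_
    exact (measure_mono (vorCell_symmDiff_subset s r i)).trans (measure_biUnion_finset_le _ _)
  simp only [ContinuousAt, hcell]
  exact tendsto_measure_of_tendsto_measure_symmDiff (measure_ne_top ν _) hsymm

/-- For a compact X ⊂ ℝ^d and a configuration r with pairwise distinct points,
the Lebesgue measure of the i-th Voronoi cell is continuous at r. -/
theorem stmt_16 (d N : ℕ) (X : Set (EuclideanSpace ℝ (Fin d)))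
    (hX : IsCompact X)
    (r : Fin N → EuclideanSpace ℝ (Fin d))
    (hinj : Function.Injective r) (hr : ∀ m, r m ∈ X) (i : Fin N) :
    ContinuousAt (fun s : Fin N → EuclideanSpace ℝ (Fin d) =>
      volume (vorCell X s i)) r :=
  stmt_16_general d N X hX r hinj i
end

section
/- On the discrete circle with M equally spaced positions and interval lengths ℓ_1, …, ℓ_N (multiples of 1/M summing to 1), the expected nearest-server distance for a user uniform on the M positions equals (1/4) Σ_k ℓ_k² − O/(4M²), where O is the number of intervals ℓ_k whose length ℓ_k·M is odd; in particular the correction term O/(4M²) is at most 1/(4M). -/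
/-- Distance on the circle of circumference 1. -/
noncomputable def circleDist (u v : ℝ) : ℝ := min |u - v| (1 - |u - v|)

/-!
Server `k` sits at `s k / M` with `s k = ℓ 0 + ⋯ + ℓ (k - 1)`, so the `M` positions split into the
gaps `[s k, s k + ℓ k)`. No server lies strictly inside a gap, so a user at `s k + j` is nearest to
one of the gap's two end servers (the last gap ends at `1`, which is the server at `0`), at
distance `min j (ℓ k - j) / M`. Summing `min j (n - j)` over a gap of length `n` gives
`(n² - n % 2) / 4`, and the number of odd gaps is at most `N ≤ M`.
-/

open Finset

theorem circleDist_le_abs_sub (u v : ℝ) : circleDist u v ≤ |u - v| := min_le_left _ _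

theorem circleDist_zero_le (u : ℝ) : circleDist u 0 ≤ 1 - u := by
  rw [circleDist, sub_zero]
  exact (min_le_right _ _).trans (by linarith [le_abs_self u])

theorem min_sub_le_circleDist {a b u v : ℝ} (ha : 0 ≤ a) (hau : a ≤ u) (hub : u ≤ b)
    (hb : b ≤ 1) (hv₀ : 0 ≤ v) (hv₁ : v ≤ 1) (hv : v ≤ a ∨ b ≤ v) :
    min (u - a) (b - u) ≤ circleDist u v := by
  rw [circleDist]
  rcases hv with hv | hv
  · rw [abs_of_nonneg (by linarith)]
    exact le_min ((min_le_left _ _).trans (by linarith)) ((min_le_right _ _).trans (by linarith))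
  · rw [abs_of_nonpos (by linarith)]
    exact le_min ((min_le_right _ _).trans (by linarith)) ((min_le_left _ _).trans (by linarith))

theorem Nat.four_mul_sum_range_min_add_mod_two (n : ℕ) :
    4 * ∑ j ∈ range n, min j (n - j) + n % 2 = n ^ 2 := by
  induction n using Nat.twoStepInduction with
  | zero => simp
  | one => simp
  | more n ih _ =>
    have hshift : ∀ i ∈ range (n + 1), min (i + 1) (n + 2 - (i + 1)) = min i (n - i) + 1 :=
      fun i hi => by have := mem_range.mp hi; omega
    have hstep : ∑ j ∈ range (n + 2), min j (n + 2 - j) =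
        ∑ j ∈ range n, min j (n - j) + (n + 1) := by
      rw [sum_range_succ', sum_congr rfl hshift]
      simp [sum_add_distrib, sum_range_succ]
    rw [hstep]
    have : (n + 2) % 2 = n % 2 := Nat.add_mod_right n 2
    nlinarith

theorem Finset.four_mul_sum_sum_range_min_add_card_odd {ι : Type*} (s : Finset ι) (ℓ : ι → ℕ) :
    4 * ∑ k ∈ s, ∑ j ∈ range (ℓ k), min j (ℓ k - j) + #{k ∈ s | Odd (ℓ k)} = ∑ k ∈ s, ℓ k ^ 2 := by
  have hmod : ∀ n : ℕ, (if Odd n then 1 else 0) = n % 2 := fun n => by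
    split_ifs with h
    · exact (Nat.odd_iff.mp h).symm
    · exact (Nat.even_iff.mp (Nat.not_odd_iff_even.mp h)).symm
  rw [card_filter, mul_sum, ← sum_add_distrib]
  exact sum_congr rfl fun k _ => by rw [hmod, Nat.four_mul_sum_range_min_add_mod_two]

theorem Finset.sum_range_sum_eq_sum_sum_range {ι M : Type*} [LinearOrder ι] [AddCommMonoid M]
    (t : Finset ι) (ℓ : ι → ℕ) (f : ℕ → M) :
    ∑ u ∈ range (∑ i ∈ t, ℓ i), f u =
      ∑ k ∈ t, ∑ j ∈ range (ℓ k), f (∑ i ∈ t with i < k, ℓ i + j) := by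
  induction t using Finset.induction_on_max with
  | empty => simp
  | insert a t hlt ih =>
    have ha : a ∉ t := fun h => lt_irrefl a (hlt a h)
    have hbelow : ∀ k ∈ t, {i ∈ insert a t | i < k} = {i ∈ t | i < k} := fun k hk => by
      rw [filter_insert, if_neg (not_lt.mpr (hlt k hk).le)]
    rw [sum_insert ha, sum_insert ha, add_comm, sum_range_add, ih, add_comm,
      filter_insert, if_neg (lt_irrefl a), filter_true_of_mem hlt]
    congr 1
    exact sum_congr rfl fun k hk => by rw [hbelow k hk]

theorem Fin.Iio_eq_Iic_of_val_eq_add_one {N : ℕ} {k k' : Fin N} (h : k'.val = k.val + 1) :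
    Iio k' = Iic k := by
  ext i; simp only [mem_Iio, mem_Iic, Fin.lt_def, Fin.le_def]; omega

theorem Fin.Iic_eq_univ_of_val_add_one_eq {N : ℕ} {k : Fin N} (h : k.val + 1 = N) :
    Iic k = univ := by
  ext i; simp only [mem_Iic, mem_univ, Fin.le_def, iff_true]; omega

theorem Fin.Iio_eq_empty_of_val_eq_zero {N : ℕ} {k : Fin N} (h : k.val = 0) : Iio k = ∅ := by
  ext i; simp only [mem_Iio, Fin.lt_def, h, notMem_empty, iff_false]; omega

section Servers

variable {N M : ℕ} (ℓ : Fin N → ℕ)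

theorem exists_circleDist_sum_Iio_le (hM : 0 < M) (hsum : ∑ k, ℓ k = M) (k : Fin N) {u : ℝ}
    (hu : u ≤ ((∑ i ∈ Iic k, ℓ i : ℕ) : ℝ) / M) :
    ∃ k', circleDist u (((∑ i ∈ Iio k', ℓ i : ℕ) : ℝ) / M) ≤
      ((∑ i ∈ Iic k, ℓ i : ℕ) : ℝ) / M - u := by
  by_cases hlast : k.val + 1 = N
  · refine ⟨⟨0, by omega⟩, ?_⟩
    rw [Fin.Iio_eq_empty_of_val_eq_zero rfl, Fin.Iic_eq_univ_of_val_add_one_eq hlast, hsum,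
      sum_empty, Nat.cast_zero, zero_div, div_self (by positivity)]
    exact circleDist_zero_le u
  · refine ⟨⟨k.val + 1, by omega⟩, ?_⟩
    rw [Fin.Iio_eq_Iic_of_val_eq_add_one rfl, ← abs_of_nonneg (sub_nonneg.mpr hu), abs_sub_comm]
    exact circleDist_le_abs_sub _ _

theorem inf'_circleDist_sum_Iio (hM : 0 < M) (hsum : ∑ k, ℓ k = M)
    (hne : (univ : Finset (Fin N)).Nonempty) (k : Fin N) {j : ℕ} (hj : j < ℓ k) :
    univ.inf' hne (fun k' => circleDist (((∑ i ∈ Iio k, ℓ i + j : ℕ) : ℝ) / M)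
        (((∑ i ∈ Iio k', ℓ i : ℕ) : ℝ) / M)) = ((min j (ℓ k - j) : ℕ) : ℝ) / M := by
  set s : Fin N → ℕ := fun k' => ∑ i ∈ Iio k', ℓ i
  have hMR : (0 : ℝ) < M := by exact_mod_cast hM
  have hdiv : ∀ {x y : ℕ}, x ≤ y → (x : ℝ) / M ≤ y / M := fun h => by gcongr
  have hle_one : ∀ {x : ℕ}, x ≤ M → (x : ℝ) / M ≤ 1 := fun h => (hdiv h).trans_eq (div_self hMR.ne')
  have hsM : ∀ k', s k' ≤ M := fun k' => hsum ▸ sum_le_sum_of_subset (subset_univ _)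
  have hend : s k + ℓ k = ∑ i ∈ Iic k, ℓ i := sum_Iio_add_eq_sum_Iic k
  have hbM : s k + ℓ k ≤ M := hsum ▸ hend ▸ sum_le_sum_of_subset (subset_univ _)
  have hleft : ((s k + j : ℕ) : ℝ) / M - (s k : ℕ) / M = j / M := by push_cast; ring
  have hright : ((s k + ℓ k : ℕ) : ℝ) / M - ((s k + j : ℕ) : ℝ) / M = ((ℓ k - j : ℕ) : ℝ) / M := by
    rw [Nat.cast_sub hj.le]; push_cast; ring
  rw [Nat.cast_min, ← min_div_div_right hMR.le, ← hleft, ← hright]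
  apply le_antisymm
  · refine le_min ((inf'_le _ (mem_univ k)).trans ?_) ?_
    · exact (circleDist_le_abs_sub _ _).trans (abs_of_nonneg (by rw [hleft]; positivity)).le
    obtain ⟨k', hk'⟩ := exists_circleDist_sum_Iio_le ℓ hM hsum k
      (u := ((s k + j : ℕ) : ℝ) / M) (hend ▸ hdiv (by omega))
    exact (inf'_le _ (mem_univ k')).trans (hend ▸ hk')
  · refine le_inf' _ _ fun k' _ => min_sub_le_circleDist (by positivity) (hdiv (by omega))
      (hdiv (by omega)) (hle_one hbM) (by positivity) (hle_one (hsM k')) ?_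
    rcases le_or_gt k' k with h | h
    · exact .inl (hdiv (sum_le_sum_of_subset (Iio_subset_Iio h)))
    · refine .inr (hdiv ?_)
      rw [hend]
      exact sum_le_sum_of_subset fun i hi => mem_Iio.mpr ((mem_Iic.mp hi).trans_lt h)

end Servers

/-- On the discrete circle with M equally spaced positions, with N servers whose
cyclic gaps are ℓ_k/M (ℓ_k ∈ ℕ, positive, summing to M; server k at position
(Σ_{i<k} ℓ_i)/M), the expected nearest-server distance for a user uniform on the
M positions equals (1/4) Σ (ℓ_k/M)² − O/(4M²), where O is the number of gaps of
odd length; moreover O/(4M²) ≤ 1/(4M). -/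
theorem stmt_18 (M N : ℕ) (hM : 0 < M) (hN : 0 < N)
    (ℓ : Fin N → ℕ) (hpos : ∀ k, 0 < ℓ k) (hsum : ∑ k, ℓ k = M) :
    (1 / (M : ℝ)) * ∑ u ∈ Finset.range M,
        (Finset.univ.inf' (Finset.univ_nonempty_iff.mpr ⟨⟨0, hN⟩⟩)
          fun k => circleDist ((u : ℝ) / M) (((∑ i ∈ Finset.Iio k, ℓ i : ℕ) : ℝ) / M)) =
      (1 / 4) * ∑ k, ((ℓ k : ℝ) / M) ^ 2 -
        ((Finset.univ.filter fun k => Odd (ℓ k)).card : ℝ) / (4 * M ^ 2) ∧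
    ((Finset.univ.filter fun k => Odd (ℓ k)).card : ℝ) / (4 * M ^ 2) ≤
      1 / (4 * M) := by
  have hblocks := sum_range_sum_eq_sum_sum_range univ ℓ fun u =>
    univ.inf' (univ_nonempty_iff.mpr ⟨⟨0, hN⟩⟩) fun k =>
      circleDist ((u : ℝ) / M) (((∑ i ∈ Iio k, ℓ i : ℕ) : ℝ) / M)
  simp only [hsum, filter_gt_eq_Iio] at hblocks
  have hcount := congrArg (Nat.cast : ℕ → ℝ) (four_mul_sum_sum_range_min_add_card_odd univ ℓ)
  have hNM : #{k | Odd (ℓ k)} ≤ M := (card_filter_le _ _).trans <| by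
    simpa [← hsum] using card_nsmul_le_sum univ ℓ 1 fun k _ => hpos k
  constructor
  · rw [hblocks]
    simp only [sum_congr rfl fun k _ => sum_congr rfl fun j hj =>
      inf'_circleDist_sum_Iio ℓ hM hsum _ k (mem_range.mp hj)]
    simp only [div_pow, ← sum_div]
    field_simp
    push_cast at hcount ⊢
    linarith
  · calc (#{k | Odd (ℓ k)} : ℝ) / (4 * M ^ 2) ≤ (M : ℝ) / (4 * M ^ 2) := by
          gcongr
      _ = 1 / (4 * (M : ℝ)) := by field_simp
end
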